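/- Every entry of the vector σ* Ψ^{-1} σ* 1 is positive, and the maximum of the smallest eigenvalue of W(b) over all unit vectors b in ℝ^n exists and equals (1ᵀ σ* Ψ^{-1} σ* 1)^{-1}. Equivalently, the worst-case minimal control energy φ = min_{‖b‖=1} max_{‖x‖=1} xᵀ W(b)^{-1} x equals 1ᵀ σ* Ψ^{-1} σ* 1. -/

import Mathlib

/-!
Let `A = Ψ⁻¹`, `B = σ* A σ*`, `p = B 1` and `S = 1ᵀ p`. Every minor of a Cauchy matrix is again
a Cauchy matrix, and Cauchy determinants with increasing parameters are positive (one Schur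
complement step turns a Cauchy matrix into a diagonally rescaled smaller one), so by the adjugate
formula `B` is entrywise positive. `Ψ` is positive definite, being the Gram matrix of
`t ↦ exp (-λᵢ t)` in `L²(0, ∞)`. As `B` is entrywise nonnegative, `diag p - B` is a weighted
graph Laplacian, hence `A ≤ diag p`, and inverting gives `diag (1 / p) ≤ Ψ`. For
`bᵢ = √(pᵢ / S)` this is `W(b) ≥ 1 / S`, with equality on the eigenvector `σ* b`. Conversely,
for every unit vector `c` the Rayleigh quotient of `W(c)` at `x = σ* p / c` is
`S / ‖x‖² ≤ 1 / S` by Cauchy–Schwarz (and it is `0` at a basis vector `eᵢ` when `cᵢ = 0`).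
-/

open Matrix BigOperators

/-- The Cauchy matrix with entries `1/(λᵢ + λⱼ)`. -/
noncomputable def cauchyPsi (n : ℕ) (lam : Fin n → ℝ) : Matrix (Fin n) (Fin n) ℝ :=
  Matrix.of fun i j => 1 / (lam i + lam j)

/-- `W(b) = diag(b) Ψ diag(b)`. -/
noncomputable def cauchyW (n : ℕ) (lam : Fin n → ℝ) (b : Fin n → ℝ) :
    Matrix (Fin n) (Fin n) ℝ :=
  Matrix.diagonal b * cauchyPsi n lam * Matrix.diagonal b

/-- The diagonal signature matrix `σ*` with `i`-th diagonal entry `(-1)^i`. -/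
noncomputable def sigmaStar (n : ℕ) : Matrix (Fin n) (Fin n) ℝ :=
  Matrix.diagonal fun i : Fin n => (-1 : ℝ) ^ (i : ℕ)

open Finset

theorem Matrix.det_succ_eq_mul_det_schur {K : Type*} [Field K] {m : ℕ}
    (M : Matrix (Fin (m + 1)) (Fin (m + 1)) K) (h : M 0 0 ≠ 0) :
    M.det = M 0 0 *
      (of fun i j : Fin m => M i.succ j.succ - M i.succ 0 / M 0 0 * M 0 j.succ).det := by
  set c : Fin (m + 1) → K := Fin.cons 0 fun i => M i.succ 0 / M 0 0
  set M' : Matrix (Fin (m + 1)) (Fin (m + 1)) K := of fun i j => M i j - c i * M 0 j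
  have hM' : M.det = M'.det :=
    det_eq_of_forall_row_eq_smul_add_const c 0 rfl fun i j => by simp [M', c]
  rw [hM', det_succ_column_zero, Fin.sum_univ_succ]
  have hcol : ∀ i : Fin m, M' i.succ 0 = 0 := fun i => by simp [M', c, div_mul_cancel₀ _ h]
  simp only [hcol, mul_zero, zero_mul, sum_const_zero, add_zero]
  simp [M', c, submatrix]

noncomputable def cauchyMatrix {ι : Type*} (x y : ι → ℝ) : Matrix ι ι ℝ :=
  of fun i j => (x i + y j)⁻¹

theorem cauchyMatrix_submatrix {ι κ : Type*} (x y : ι → ℝ) (f g : κ → ι) :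
    (cauchyMatrix x y).submatrix f g = cauchyMatrix (x ∘ f) (y ∘ g) := rfl

theorem cauchyMatrix_schur {m : ℕ} (x y : Fin (m + 1) → ℝ) (hxy : ∀ i j, x i + y j ≠ 0) :
    (of fun i j : Fin m => cauchyMatrix x y i.succ j.succ -
        cauchyMatrix x y i.succ 0 / cauchyMatrix x y 0 0 * cauchyMatrix x y 0 j.succ) =
      diagonal (fun i => (x i.succ - x 0) / (x i.succ + y 0)) *
        cauchyMatrix (x ∘ Fin.succ) (y ∘ Fin.succ) *
          diagonal (fun j => (y j.succ - y 0) / (x 0 + y j.succ)) := by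
  ext i j
  have h₁ := hxy i.succ j.succ
  have h₂ := hxy i.succ 0
  have h₃ := hxy 0 j.succ
  have h₄ := hxy 0 0
  simp only [cauchyMatrix, of_apply, Function.comp_apply, diagonal_mul, mul_diagonal]
  field_simp
  ring

theorem det_cauchyMatrix_pos {m : ℕ} {x y : Fin m → ℝ} (hx : StrictMono x) (hy : StrictMono y)
    (hxy : ∀ i j, 0 < x i + y j) : 0 < (cauchyMatrix x y).det := by
  induction m with
  | zero => simp
  | succ m ih =>
    have hr : ∀ i : Fin m, 0 < (x i.succ - x 0) / (x i.succ + y 0) := fun i =>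
      div_pos (sub_pos.2 (hx i.succ_pos)) (hxy _ _)
    have hs : ∀ j : Fin m, 0 < (y j.succ - y 0) / (x 0 + y j.succ) := fun j =>
      div_pos (sub_pos.2 (hy j.succ_pos)) (hxy _ _)
    have hC : 0 < (cauchyMatrix (x ∘ Fin.succ) (y ∘ Fin.succ)).det :=
      ih (hx.comp Fin.strictMono_succ) (hy.comp Fin.strictMono_succ) fun i j => hxy _ _
    have h00 : 0 < cauchyMatrix x y 0 0 := inv_pos.2 (hxy 0 0)
    rw [det_succ_eq_mul_det_schur _ h00.ne', cauchyMatrix_schur x y fun i j => (hxy i j).ne',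
      det_mul, det_mul, det_diagonal, det_diagonal]
    exact mul_pos h00 <| mul_pos (mul_pos (prod_pos fun i _ => hr i) hC) (prod_pos fun j _ => hs j)

theorem neg_one_pow_mul_inv_cauchyMatrix_pos {m : ℕ} {x y : Fin m → ℝ} (hx : StrictMono x)
    (hy : StrictMono y) (hxy : ∀ i j, 0 < x i + y j) (i j : Fin m) :
    0 < (-1) ^ (i + j : ℕ) * (cauchyMatrix x y)⁻¹ i j := by
  cases m with
  | zero => exact i.elim0
  | succ m =>
    have hminor := det_cauchyMatrix_pos (hx.comp (Fin.strictMono_succAbove j))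
      (hy.comp (Fin.strictMono_succAbove i)) fun _ _ => hxy _ _
    have hdet := det_cauchyMatrix_pos hx hy hxy
    have hsign : (-1 : ℝ) ^ (i + j : ℕ) * (-1) ^ (j + i : ℕ) = 1 := by
      rw [add_comm (j : ℕ), ← pow_add]
      exact Even.neg_one_pow ⟨_, rfl⟩
    rw [Matrix.inv_def, Matrix.smul_apply, adjugate_fin_succ_eq_det_submatrix, Ring.inverse_eq_inv,
      smul_eq_mul, cauchyMatrix_submatrix]
    set d := (cauchyMatrix (x ∘ j.succAbove) (y ∘ i.succAbove)).det
    calc 0 < (cauchyMatrix x y).det⁻¹ * d := mul_pos (inv_pos.2 hdet) hminor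
      _ = _ := by linear_combination (cauchyMatrix x y).det⁻¹ * d * hsign.symm

section

open MeasureTheory Set Real

theorem integral_exp_neg_mul_mul_exp_neg_mul_Ioi {a b : ℝ} (h : 0 < a + b) :
    ∫ t in Ioi (0 : ℝ), exp (-a * t) * exp (-b * t) = (a + b)⁻¹ := by
  simp_rw [← exp_add, ← add_mul, ← neg_add]
  rw [integral_exp_mul_Ioi (neg_neg_iff_pos.2 h), mul_zero, exp_zero, neg_div_neg_eq, one_div]

theorem cauchyMatrix_posSemidef {ι : Type*} [Finite ι] {x : ι → ℝ} (hx : ∀ i, 0 < x i) :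
    (cauchyMatrix x x).PosSemidef := by
  have hL2 : ∀ i, MemLp (fun t => exp (-x i * t)) 2 (volume.restrict (Ioi 0)) := fun i =>
    (memLp_two_iff_integrable_sq (by fun_prop)).2 <|
      (exp_neg_integrableOn_Ioi 0 (mul_pos two_pos (hx i))).congr_fun
        (fun t _ => by rw [sq, ← exp_add]; ring_nf) measurableSet_Ioi
  suffices cauchyMatrix x x = gram ℝ fun i => (hL2 i).toLp from this ▸ posSemidef_gram ℝ _
  ext i j
  rw [gram_apply, L2.inner_def, cauchyMatrix, of_apply,
    ← integral_exp_neg_mul_mul_exp_neg_mul_Ioi (add_pos (hx i) (hx j))]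
  refine integral_congr_ae ?_
  filter_upwards [(hL2 i).coeFn_toLp, (hL2 j).coeFn_toLp] with t hi hj
  rw [hi, hj, inner_apply]

end

section

variable {ι : Type*} [Fintype ι]

theorem Matrix.IsSymm.dotProduct_mulVec_le_of_nonneg {B : Matrix ι ι ℝ} (hB : B.IsSymm)
    (h0 : ∀ i j, 0 ≤ B i j) (w : ι → ℝ) :
    w ⬝ᵥ B *ᵥ w ≤ ∑ i, (B *ᵥ 1) i * w i ^ 2 := by
  have hswap : ∑ i, ∑ j, B i j * w j ^ 2 = ∑ i, ∑ j, B i j * w i ^ 2 := by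
    rw [sum_comm]
    simp_rw [hB.apply]
  have hsq : 0 ≤ ∑ i, ∑ j, B i j * (w i - w j) ^ 2 :=
    sum_nonneg fun i _ => sum_nonneg fun j _ => mul_nonneg (h0 i j) (sq_nonneg _)
  have hexp : ∑ i, ∑ j, B i j * (w i - w j) ^ 2 =
      ∑ i, ∑ j, B i j * w i ^ 2 + ∑ i, ∑ j, B i j * w j ^ 2 - 2 * (w ⬝ᵥ B *ᵥ w) := by
    simp only [dotProduct, mulVec, mul_sum, ← sum_add_distrib, ← sum_sub_distrib]
    exact sum_congr rfl fun i _ => sum_congr rfl fun j _ => by ring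
  have hdiag : ∑ i, (B *ᵥ 1) i * w i ^ 2 = ∑ i, ∑ j, B i j * w i ^ 2 := by
    simp [mulVec, dotProduct, sum_mul]
  linarith

variable [DecidableEq ι]

theorem Matrix.IsHermitian.forall_le_of_mem_spectrum_iff {W : Matrix ι ι ℝ} (hW : W.IsHermitian)
    (c : ℝ) : (∀ μ ∈ spectrum ℝ W, c ≤ μ) ↔ ∀ x : ι → ℝ, c * (x ⬝ᵥ x) ≤ x ⬝ᵥ W *ᵥ x := by
  have hherm : (W - algebraMap ℝ _ c).IsHermitian :=
    hW.sub (by simp [algebraMap_eq_diagonal])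
  calc (∀ μ ∈ spectrum ℝ W, c ≤ μ) ↔ spectrum ℝ (W - algebraMap ℝ _ c) ⊆ {a | 0 ≤ a} := by
        simp [← spectrum.sub_singleton_eq, Set.subset_def]
    _ ↔ (W - algebraMap ℝ _ c).PosSemidef := by
        rw [posSemidef_iff_isHermitian_and_spectrum_nonneg, and_iff_right hherm]
    _ ↔ ∀ x : ι → ℝ, c * (x ⬝ᵥ x) ≤ x ⬝ᵥ W *ᵥ x := by
        rw [posSemidef_iff_dotProduct_mulVec, and_iff_right hherm]
        simp only [star_trivial, sub_mulVec, Algebra.algebraMap_eq_smul_one, smul_mulVec,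
          one_mulVec, dotProduct_sub, dotProduct_smul, smul_eq_mul, sub_nonneg]

theorem Matrix.IsHermitian.sInf_spectrum_mul_le {W : Matrix ι ι ℝ} (hW : W.IsHermitian)
    (x : ι → ℝ) : sInf (spectrum ℝ W) * (x ⬝ᵥ x) ≤ x ⬝ᵥ W *ᵥ x :=
  (hW.forall_le_of_mem_spectrum_iff _).1
    (fun _ hμ => csInf_le (finite_spectrum W).bddBelow hμ) x

theorem Matrix.mem_spectrum_of_mulVec_eq_smul {W : Matrix ι ι ℝ} {μ : ℝ} {v : ι → ℝ}
    (hv : v ≠ 0) (h : W *ᵥ v = μ • v) : μ ∈ spectrum ℝ W := by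
  rw [← AlgEquiv.spectrum_eq toLinAlgEquiv', ← Module.End.hasEigenvalue_iff_mem_spectrum]
  exact Module.End.hasEigenvalue_of_hasEigenvector
    ⟨by simpa [Module.End.mem_eigenspace_iff] using h, hv⟩

theorem Matrix.PosDef.sum_sq_div_le_dotProduct_mulVec {Ψ : Matrix ι ι ℝ} (hΨ : Ψ.PosDef)
    {p : ι → ℝ} (h : ∀ y, y ⬝ᵥ Ψ⁻¹ *ᵥ y ≤ ∑ i, p i * y i ^ 2) (w : ι → ℝ) :
    ∑ i, w i ^ 2 / p i ≤ w ⬝ᵥ Ψ *ᵥ w := by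
  -- expand `0 ≤ zᵀ Ψ⁻¹ z` at `z = Ψ w - w / p`
  set y : ι → ℝ := fun i => w i / p i
  have hinv : Ψ⁻¹ * Ψ = 1 := nonsing_inv_mul Ψ ((isUnit_iff_isUnit_det Ψ).1 hΨ.isUnit)
  have hsymm : (Ψ⁻¹)ᵀ = Ψ⁻¹ := (isHermitian_iff_isSymm.1 hΨ.inv.isHermitian).eq
  have hnonneg : 0 ≤ (Ψ *ᵥ w - y) ⬝ᵥ Ψ⁻¹ *ᵥ (Ψ *ᵥ w - y) := by
    simpa using hΨ.inv.posSemidef.dotProduct_mulVec_nonneg (Ψ *ᵥ w - y)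
  have hexp : (Ψ *ᵥ w - y) ⬝ᵥ Ψ⁻¹ *ᵥ (Ψ *ᵥ w - y) =
      w ⬝ᵥ Ψ *ᵥ w - 2 * (y ⬝ᵥ w) + y ⬝ᵥ Ψ⁻¹ *ᵥ y := by
    have hw : Ψ⁻¹ *ᵥ (Ψ *ᵥ w) = w := by rw [mulVec_mulVec, hinv, one_mulVec]
    have hy : (Ψ *ᵥ w) ⬝ᵥ Ψ⁻¹ *ᵥ y = y ⬝ᵥ w := by
      rw [dotProduct_mulVec, ← mulVec_transpose, hsymm, dotProduct_comm, hw]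
    rw [mulVec_sub, sub_dotProduct, dotProduct_sub, dotProduct_sub, hw, hy,
      dotProduct_comm (Ψ *ᵥ w)]
    ring
  have hyw : y ⬝ᵥ w = ∑ i, w i ^ 2 / p i := by
    simp only [dotProduct, y]; exact sum_congr rfl fun i _ => by ring
  have hyy : ∑ i, p i * y i ^ 2 = ∑ i, w i ^ 2 / p i := by
    refine sum_congr rfl fun i _ => ?_
    rcases eq_or_ne (p i) 0 with hp | hp
    · simp [y, hp]
    · simp only [y]; field_simp
  linarith [h y]

theorem Matrix.diagonal_mulVec_eq_mul (b v : ι → ℝ) : diagonal b *ᵥ v = b * v :=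
  funext (mulVec_diagonal b v)

theorem Matrix.dotProduct_diagonal_mul_mul_diagonal_mulVec (Ψ : Matrix ι ι ℝ) (b x : ι → ℝ) :
    x ⬝ᵥ (diagonal b * Ψ * diagonal b) *ᵥ x = (b * x) ⬝ᵥ Ψ *ᵥ (b * x) := by
  have hleft : x ᵥ* diagonal b = b * x := by ext; simp [vecMul_diagonal, mul_comm]
  rw [← mulVec_mulVec, ← mulVec_mulVec, dotProduct_mulVec, hleft, diagonal_mulVec_eq_mul]

theorem Matrix.IsHermitian.diagonal_mul_mul_diagonal {Ψ : Matrix ι ι ℝ} (hΨ : Ψ.IsHermitian)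
    (b : ι → ℝ) : (diagonal b * Ψ * diagonal b).IsHermitian := by
  simpa [diagonal_conjTranspose] using isHermitian_conjTranspose_mul_mul (diagonal b) hΨ

theorem sInf_spectrum_diagonal_sqrt_mul_mul_diagonal_sqrt [Nonempty ι] {Ψ : Matrix ι ι ℝ}
    (hΨ : Ψ.IsHermitian) {u p : ι → ℝ} (hu : ∀ i, u i ^ 2 = 1) (hp : ∀ i, 0 < p i)
    (hΨup : Ψ *ᵥ (u * p) = u) (hquad : ∀ w, ∑ i, w i ^ 2 / p i ≤ w ⬝ᵥ Ψ *ᵥ w) :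
    sInf (spectrum ℝ (diagonal (fun i => √(p i / ∑ j, p j)) * Ψ *
      diagonal (fun i => √(p i / ∑ j, p j)))) = (∑ i, p i)⁻¹ := by
  set S := ∑ i, p i
  set b : ι → ℝ := fun i => √(p i / S)
  have hS : 0 < S := sum_pos (fun i _ => hp i) univ_nonempty
  have hb : ∀ i, b i ^ 2 = p i / S := fun i => Real.sq_sqrt (div_pos (hp i) hS).le
  have heigen : (diagonal b * Ψ * diagonal b) *ᵥ (u * b) = S⁻¹ • (u * b) := by
    have hbub : b * (u * b) = S⁻¹ • (u * p) := by
      ext i; simp only [Pi.mul_apply, Pi.smul_apply, smul_eq_mul]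
      linear_combination u i * hb i
    rw [← mulVec_mulVec, ← mulVec_mulVec, diagonal_mulVec_eq_mul b (u * b), hbub, mulVec_smul,
      hΨup, mulVec_smul, diagonal_mulVec_eq_mul, mul_comm]
  have hne : u * b ≠ 0 := by
    obtain ⟨i⟩ := ‹Nonempty ι›
    refine Function.ne_iff.2 ⟨i, mul_ne_zero ?_ (Real.sqrt_pos.2 (div_pos (hp i) hS)).ne'⟩
    rintro h; simpa [h] using hu i
  refine IsLeast.csInf_eq ⟨mem_spectrum_of_mulVec_eq_smul hne heigen, ?_⟩
  refine ((hΨ.diagonal_mul_mul_diagonal b).forall_le_of_mem_spectrum_iff _).2 fun x => ?_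
  calc S⁻¹ * (x ⬝ᵥ x) = ∑ i, (b * x) i ^ 2 / p i := by
        rw [dotProduct, mul_sum]
        refine sum_congr rfl fun i _ => ?_
        rw [Pi.mul_apply, mul_pow, hb]
        field_simp [(hp i).ne']
    _ ≤ _ := by
        rw [dotProduct_diagonal_mul_mul_diagonal_mulVec]
        exact hquad _

theorem sInf_spectrum_diagonal_mul_mul_diagonal_le [Nonempty ι] {Ψ : Matrix ι ι ℝ}
    (hΨ : Ψ.IsHermitian) {u p : ι → ℝ} (hu : ∀ i, u i ^ 2 = 1) (hp : ∀ i, 0 < p i)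
    (hΨup : Ψ *ᵥ (u * p) = u) {c : ι → ℝ} (hc : ∑ i, c i ^ 2 = 1) :
    sInf (spectrum ℝ (diagonal c * Ψ * diagonal c)) ≤ (∑ i, p i)⁻¹ := by
  set S := ∑ i, p i
  have hS : 0 < S := sum_pos (fun i _ => hp i) univ_nonempty
  have hRayleigh := (hΨ.diagonal_mul_mul_diagonal c).sInf_spectrum_mul_le
  obtain ⟨i, hi⟩ | hc0 := (em (∃ i, c i = 0)).imp_right not_exists.1
  · have hsingle : c * Pi.single i 1 = 0 := by
      ext j; rcases eq_or_ne j i with rfl | hj <;> simp [*]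
    have := hRayleigh (Pi.single i 1)
    rw [dotProduct_diagonal_mul_mul_diagonal_mulVec, hsingle] at this
    simp only [single_dotProduct, Pi.single_eq_same, mul_one, mulVec_zero, dotProduct_zero] at this
    linarith [inv_pos.2 hS]
  set x : ι → ℝ := u * p / c
  have hcx : c * x = u * p := by ext i; simp [x, mul_div_cancel₀ _ (hc0 i)]
  have hxWx : x ⬝ᵥ (diagonal c * Ψ * diagonal c) *ᵥ x = S := by
    rw [dotProduct_diagonal_mul_mul_diagonal_mulVec, hcx, hΨup]
    refine sum_congr rfl fun i _ => ?_
    simp only [Pi.mul_apply]; linear_combination p i * hu i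
  have hxx : S ^ 2 ≤ x ⬝ᵥ x := by
    have hxx : x ⬝ᵥ x = ∑ i, (p i / c i) ^ 2 := sum_congr rfl fun i _ => by
      simp only [x, Pi.mul_apply, Pi.div_apply]; linear_combination (p i / c i) ^ 2 * hu i
    have hpc : ∑ i, p i / c i * c i = S := sum_congr rfl fun i _ => div_mul_cancel₀ _ (hc0 i)
    simpa [hpc, hc, hxx] using sum_mul_sq_le_sq_mul_sq univ (fun i => p i / c i) c
  have hxpos : 0 < x ⬝ᵥ x := lt_of_lt_of_le (by positivity) hxx
  calc sInf (spectrum ℝ (diagonal c * Ψ * diagonal c)) ≤ S / (x ⬝ᵥ x) :=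
        (le_div_iff₀ hxpos).2 (hxWx ▸ hRayleigh x)
    _ ≤ S / S ^ 2 := div_le_div_of_nonneg_left hS.le (by positivity) hxx
    _ = S⁻¹ := by field_simp

theorem isGreatest_sInf_spectrum_diagonal_mul_mul_diagonal [Nonempty ι] {Ψ : Matrix ι ι ℝ}
    (hΨ : Ψ.PosDef) {u : ι → ℝ} (hu : ∀ i, u i ^ 2 = 1)
    (hB : ∀ i j, 0 ≤ (diagonal u * Ψ⁻¹ * diagonal u) i j)
    (hp : ∀ i, 0 < ((diagonal u * Ψ⁻¹ * diagonal u) *ᵥ 1) i) :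
    IsGreatest {r | ∃ b : ι → ℝ, ∑ i, b i ^ 2 = 1 ∧
        sInf (spectrum ℝ (diagonal b * Ψ * diagonal b)) = r}
      (1 ⬝ᵥ (diagonal u * Ψ⁻¹ * diagonal u) *ᵥ 1)⁻¹ := by
  set B := diagonal u * Ψ⁻¹ * diagonal u
  set p := B *ᵥ 1
  have huu : u * u = 1 := funext fun i => (sq (u i)).symm.trans (hu i)
  have hdiag : diagonal u * diagonal u = 1 := by
    rw [diagonal_mul_diagonal, ← diagonal_one]
    exact congrArg diagonal huu
  have hΨup : Ψ *ᵥ (u * p) = u := by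
    have : u * p = Ψ⁻¹ *ᵥ u := by
      rw [← diagonal_mulVec_eq_mul, mulVec_mulVec, ← mul_assoc, ← mul_assoc, hdiag, one_mul,
        ← mulVec_mulVec, diagonal_mulVec_eq_mul, mul_one]
    rw [this, mulVec_mulVec, mul_nonsing_inv _ ((isUnit_iff_isUnit_det Ψ).1 hΨ.isUnit), one_mulVec]
  have hquad : ∀ w, ∑ i, w i ^ 2 / p i ≤ w ⬝ᵥ Ψ *ᵥ w := by
    refine hΨ.sum_sq_div_le_dotProduct_mulVec fun y => ?_
    have hy : y ⬝ᵥ Ψ⁻¹ *ᵥ y = (u * y) ⬝ᵥ B *ᵥ (u * y) := by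
      rw [dotProduct_diagonal_mul_mul_diagonal_mulVec, ← mul_assoc, huu, one_mul]
    have hBsymm : B.IsSymm :=
      isHermitian_iff_isSymm.1 (hΨ.inv.isHermitian.diagonal_mul_mul_diagonal u)
    calc y ⬝ᵥ Ψ⁻¹ *ᵥ y ≤ ∑ i, p i * (u * y) i ^ 2 :=
          hy ▸ hBsymm.dotProduct_mulVec_le_of_nonneg hB _
      _ = ∑ i, p i * y i ^ 2 := sum_congr rfl fun i _ => by
        rw [Pi.mul_apply, mul_pow, hu, one_mul]
  rw [one_dotProduct]
  refine ⟨⟨_, ?_, sInf_spectrum_diagonal_sqrt_mul_mul_diagonal_sqrt hΨ.isHermitian hu hp hΨup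
    hquad⟩, ?_⟩
  · have hS : 0 < ∑ i, p i := sum_pos (fun i _ => hp i) univ_nonempty
    simp_rw [Real.sq_sqrt (div_pos (hp _) hS).le, ← sum_div, div_self hS.ne']
  · rintro _ ⟨c, hc, rfl⟩
    exact sInf_spectrum_diagonal_mul_mul_diagonal_le hΨ.isHermitian hu hp hΨup hc

end

/-- Every entry of `σ* Ψ⁻¹ σ* 1` is positive, and the maximum over unit vectors `b`
of the smallest eigenvalue of `W(b)` exists and equals `(1ᵀ σ* Ψ⁻¹ σ* 1)⁻¹`;
equivalently, the worst-case minimal control energy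
`φ = min_{‖b‖=1} max_{‖x‖=1} xᵀ W(b)⁻¹ x` equals `1ᵀ σ* Ψ⁻¹ σ* 1`. -/
theorem max_smallest_eigenvalue (n : ℕ) (hn : 0 < n) (lam : Fin n → ℝ)
    (hpos : ∀ i, 0 < lam i) (hmono : StrictMono lam) :
    (∀ i, 0 < (sigmaStar n * (cauchyPsi n lam)⁻¹ * sigmaStar n).mulVec
        (fun _ : Fin n => (1 : ℝ)) i) ∧
      IsGreatest
        {r : ℝ | ∃ b : Fin n → ℝ, ∑ i, b i ^ 2 = 1 ∧
          sInf (spectrum ℝ (cauchyW n lam b)) = r}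
        ((fun _ : Fin n => (1 : ℝ)) ⬝ᵥ
          (sigmaStar n * (cauchyPsi n lam)⁻¹ * sigmaStar n).mulVec
            fun _ : Fin n => (1 : ℝ))⁻¹ := by
  have : Nonempty (Fin n) := ⟨⟨0, hn⟩⟩
  have hlam : ∀ i j, 0 < lam i + lam j := fun i j => add_pos (hpos i) (hpos j)
  have hΨ : cauchyPsi n lam = cauchyMatrix lam lam := by ext; simp [cauchyPsi, cauchyMatrix]
  have hPD : (cauchyMatrix lam lam).PosDef :=
    (cauchyMatrix_posSemidef hpos).posDef_iff_isUnit.2 <| (isUnit_iff_isUnit_det _).2 <|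
      (det_cauchyMatrix_pos hmono hmono hlam).ne'.isUnit
  have hB : ∀ i j, 0 < (sigmaStar n * (cauchyPsi n lam)⁻¹ * sigmaStar n) i j := fun i j => by
    have h := neg_one_pow_mul_inv_cauchyMatrix_pos hmono hmono hlam i j
    rw [pow_add] at h
    simp only [sigmaStar, hΨ, diagonal_mul, mul_diagonal]
    linarith
  have hp : ∀ i, 0 < (sigmaStar n * (cauchyPsi n lam)⁻¹ * sigmaStar n).mulVec 1 i :=
    fun i => by simpa [mulVec, dotProduct] using sum_pos (fun j _ => hB i j) univ_nonempty
  refine ⟨hp, ?_⟩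
  simp only [cauchyW, hΨ] at hB hp ⊢
  exact isGreatest_sInf_spectrum_diagonal_mul_mul_diagonal hPD (fun i => by simp [← pow_mul])
    (fun i j => (hB i j).le) hp
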